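/- Let 0 < q < 1, w ≥ 1, m ∈ ℕ, and for i = 1,…,w let n_i ∈ ℕ with m ≤ n_i and x_i ∈ [0,1]. Then ∏_{i=1}^{w} ( [1−x_i]_q + [x_i]_q )^{−(n_i−m)} · Σ_{k₁=m}^{n₁} Σ_{k₂=m}^{n₂} ⋯ Σ_{k_w=m}^{n_w} ∏_{i=1}^{w} ( C(k_i,m)/C(n_i,m) ) · B_{k₁,…,k_w; n₁,…,n_w}(x₁,…,x_w; q) = Σ_{l₁=0}^{m} Σ_{l₂=0}^{m} ⋯ Σ_{l_w=0}^{m} q^{Σ_{i=1}^{w} C(l_i,2)} · ∏_{i=1}^{w} binom(x_i, l_i)_q · [l_i]_q! · S(m, l_i; q). -/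

import Mathlib

open Finset

/-- The `q`-number `[x]_q = (1 - q^x)/(1 - q)` (real exponent). -/
noncomputable def qnum (q x : ℝ) : ℝ := (1 - q ^ x) / (1 - q)

/-- The `q`-factorial `[n]_q! = [1]_q [2]_q ⋯ [n]_q`. -/
noncomputable def qfac (q : ℝ) (n : ℕ) : ℝ :=
  ∏ j ∈ Finset.range n, qnum q ((j : ℝ) + 1)

/-- The Gaussian binomial coefficient `binom(n,k)_q = [n]_q!/([k]_q!·[n−k]_q!)`. -/
noncomputable def qbinom (q : ℝ) (n k : ℕ) : ℝ :=
  qfac q n / (qfac q k * qfac q (n - k))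

/-- The Gaussian binomial coefficient with real upper argument,
`binom(x,k)_q = ([x]_q [x−1]_q ⋯ [x−k+1]_q)/[k]_q!`. -/
noncomputable def qbinomR (q x : ℝ) (k : ℕ) : ℝ :=
  (∏ j ∈ Finset.range k, qnum q (x - (j : ℝ))) / qfac q k

/-- The `q`-extension of the second kind Stirling numbers,
`S(n,k;q) = (q^{−C(k,2)}/[k]_q!) Σ_{i=0}^{k} (−1)^i q^{C(i,2)} binom(k,i)_q [k−i]_q^n`. -/
noncomputable def qStirling (q : ℝ) (n k : ℕ) : ℝ :=
  ((q ^ k.choose 2)⁻¹ / qfac q k) *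
    ∑ i ∈ Finset.range (k + 1),
      (-1 : ℝ) ^ i * q ^ i.choose 2 * qbinom q k i * qnum q ((k - i : ℕ) : ℝ) ^ n

/-- The modified `q`-Bernstein polynomial
`B_{k,n}(x;q) = C(n,k) [x]_q^k [1-x]_q^(n-k)`. -/
noncomputable def qBern (q : ℝ) (k n : ℕ) (x : ℝ) : ℝ :=
  (n.choose k : ℝ) * qnum q x ^ k * qnum q (1 - x) ^ (n - k)

/-!
Both sides factor over the variables. For one variable, `C(k,m) C(n,k) = C(n,m) C(n-m,k-m)` and
the binomial theorem collapse the Bernstein sum to `[x]_q^m ([x]_q + [1-x]_q)^(n-m)`, so the left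
side is `∏ᵢ [xᵢ]_q^m`. On the right, `[x]_q^m = ∑ₗ S(m,l;q) q^C(l,2) [x]_q [x-1]_q ⋯ [x-l+1]_q` is
the `q`-analogue of expanding `x^m` in falling factorials. It follows by induction on `m` from
`[x]_q = [l]_q + q^l [x-l]_q` and the recurrence `S(m+1,l+1) = S(m,l) + [l+1]_q S(m,l+1)`, whose
base case `S(0,l) = 0` for `l > 0` is Gauss's alternating sum `∑ᵢ (-1)^i q^C(i,2) binom(l,i)_q = 0`.
-/

lemma sum_Icc_choose_div_choose_mul_bernstein {K : Type*} [Field K] [CharZero K] {m n : ℕ}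
    (h : m ≤ n) (a b : K) :
    ∑ k ∈ Icc m n, ((k.choose m : K) / n.choose m) * (n.choose k * a ^ k * b ^ (n - k)) =
      a ^ m * (a + b) ^ (n - m) := by
  have hc : (n.choose m : K) ≠ 0 := Nat.cast_ne_zero.2 (Nat.choose_pos h).ne'
  rw [← Ico_add_one_right_eq_Icc, sum_Ico_eq_sum_range, add_pow, mul_sum,
    show n + 1 - m = n - m + 1 by omega]
  refine sum_congr rfl fun j _ => ?_
  have hchoose : (n.choose (m + j) : K) * (m + j).choose m = n.choose m * (n - m).choose j := by
    have := Nat.choose_mul (n := n) (k := m + j) (s := m) (by omega)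
    rw [Nat.add_sub_cancel_left] at this
    exact_mod_cast this
  rw [show n - (m + j) = n - m - j by omega, pow_add]
  field_simp
  linear_combination (a ^ m * a ^ j * b ^ (n - m - j)) * hchoose

section QNumber

variable {q : ℝ}

lemma qnum_zero : qnum q 0 = 0 := by
  simp [qnum]

lemma qnum_add (hq0 : 0 < q) (a b : ℝ) : qnum q (a + b) = qnum q a + q ^ a * qnum q b := by
  rw [qnum, qnum, qnum, Real.rpow_add hq0]
  ring

lemma qnum_natCast_add (a b : ℕ) :
    qnum q ((a + b : ℕ) : ℝ) = qnum q a + q ^ a * qnum q b := by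
  simp only [qnum, Real.rpow_natCast, pow_add]
  ring

lemma qnum_natCast_eq_sub_add {i n : ℕ} (h : i ≤ n) :
    qnum q n = qnum q ↑(n - i) + q ^ (n - i) * qnum q i := by
  simpa [Nat.sub_add_cancel h] using qnum_natCast_add (q := q) (n - i) i

lemma qnum_pos (hq0 : 0 < q) (hq1 : q ≠ 1) {y : ℝ} (hy : 0 < y) : 0 < qnum q y := by
  rcases hq1.lt_or_gt with hq1 | hq1
  · exact div_pos (sub_pos.2 (Real.rpow_lt_one hq0.le hq1 hy)) (sub_pos.2 hq1)
  · exact div_pos_of_neg_of_neg (sub_neg.2 (Real.one_lt_rpow hq1 hy)) (sub_neg.2 hq1)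

lemma qnum_nonneg (hq0 : 0 < q) (hq1 : q ≠ 1) {y : ℝ} (hy : 0 ≤ y) : 0 ≤ qnum q y := by
  rcases hy.eq_or_lt with rfl | hy
  · rw [qnum_zero]
  · exact (qnum_pos hq0 hq1 hy).le

lemma qnum_one_sub_add_qnum_pos (hq0 : 0 < q) (hq1 : q ≠ 1) {x : ℝ} (hx : x ∈ Set.Icc 0 1) :
    0 < qnum q (1 - x) + qnum q x := by
  rcases hx.1.eq_or_lt with rfl | hx0
  · simpa [qnum_zero] using qnum_pos hq0 hq1 one_pos
  · exact add_pos_of_nonneg_of_pos (qnum_nonneg hq0 hq1 (by linarith [hx.2])) (qnum_pos hq0 hq1 hx0)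

lemma qfac_zero : qfac q 0 = 1 := by
  simp [qfac]

lemma qfac_succ (n : ℕ) : qfac q (n + 1) = qfac q n * qnum q (n + 1) := by
  simp [qfac, prod_range_succ]

lemma qfac_pos (hq0 : 0 < q) (hq1 : q ≠ 1) (n : ℕ) : 0 < qfac q n :=
  prod_pos fun j _ => qnum_pos hq0 hq1 (by positivity)

end QNumber

section QBernstein

variable {q : ℝ}

lemma zpow_neg_mul_sum_choose_div_choose_mul_qBern (hq0 : 0 < q) (hq1 : q ≠ 1) {x : ℝ}
    (hx : x ∈ Set.Icc 0 1) {m n : ℕ} (h : m ≤ n) :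
    (qnum q (1 - x) + qnum q x) ^ (-((n : ℤ) - m)) *
        ∑ k ∈ Icc m n, ((k.choose m : ℝ) / n.choose m) * qBern q k n x = qnum q x ^ m := by
  have hs := (qnum_one_sub_add_qnum_pos hq0 hq1 hx).ne'
  simp only [qBern]
  rw [sum_Icc_choose_div_choose_mul_bernstein h, add_comm (qnum q x),
    show -((n : ℤ) - m) = -((n - m : ℕ) : ℤ) by omega, zpow_neg, zpow_natCast]
  field_simp

end QBernstein

section GaussianBinomial

variable {q : ℝ}

lemma qbinom_zero_right (hq0 : 0 < q) (hq1 : q ≠ 1) (n : ℕ) : qbinom q n 0 = 1 := by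
  simp [qbinom, qfac_zero, (qfac_pos hq0 hq1 n).ne']

lemma qbinom_self (hq0 : 0 < q) (hq1 : q ≠ 1) (n : ℕ) : qbinom q n n = 1 := by
  simp [qbinom, qfac_zero, (qfac_pos hq0 hq1 n).ne']

lemma qbinom_succ_succ (hq0 : 0 < q) (hq1 : q ≠ 1) {i l : ℕ} (h : i < l) :
    qbinom q (l + 1) (i + 1) = qbinom q l i + q ^ (i + 1) * qbinom q l (i + 1) := by
  obtain ⟨d, rfl⟩ := Nat.exists_eq_add_of_lt h
  have hsplit : qnum q (↑(i + d + 1) + 1) = qnum q (↑i + 1) + q ^ (i + 1) * qnum q (↑d + 1) := by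
    have := qnum_natCast_add (q := q) (i + 1) (d + 1)
    push_cast at this ⊢
    rw [← this]
    ring_nf
  have hi := (qfac_pos hq0 hq1 i).ne'
  have hd := (qfac_pos hq0 hq1 d).ne'
  have hi' := (qnum_pos hq0 hq1 (by positivity : (0 : ℝ) < i + 1)).ne'
  have hd' := (qnum_pos hq0 hq1 (by positivity : (0 : ℝ) < d + 1)).ne'
  simp only [qbinom, show i + d + 1 + 1 - (i + 1) = d + 1 by omega,
    show i + d + 1 - (i + 1) = d by omega, show i + d + 1 - i = d + 1 by omega, qfac_succ]
  rw [hsplit]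
  field_simp

lemma qnum_mul_qbinom_succ_succ (hq0 : 0 < q) (hq1 : q ≠ 1) (i l : ℕ) :
    qnum q (↑i + 1) * qbinom q (l + 1) (i + 1) = qnum q (↑l + 1) * qbinom q l i := by
  have hi := (qfac_pos hq0 hq1 i).ne'
  have hl := (qfac_pos hq0 hq1 (l - i)).ne'
  have hi' := (qnum_pos hq0 hq1 (by positivity : (0 : ℝ) < i + 1)).ne'
  simp only [qbinom, Nat.add_sub_add_right, qfac_succ]
  field_simp

end GaussianBinomial

/-- `q^{C(l,2)} [l]_q! S(m,l;q)`, the `q`-analogue of the number of surjections from an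
`m`-set onto an `l`-set. -/
noncomputable def qSurj (q : ℝ) (m l : ℕ) : ℝ :=
  ∑ i ∈ range (l + 1), (-1 : ℝ) ^ i * q ^ i.choose 2 * qbinom q l i * qnum q ((l - i : ℕ) : ℝ) ^ m

lemma Nat.succ_choose_two (n : ℕ) : (n + 1).choose 2 = n.choose 2 + n := by
  rw [Nat.choose_succ_succ', Nat.choose_one_right, add_comm]

section QSurj

variable {q : ℝ}

lemma qSurj_zero_zero (hq0 : 0 < q) (hq1 : q ≠ 1) : qSurj q 0 0 = 1 := by
  simp [qSurj, qbinom_zero_right hq0 hq1]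

lemma qSurj_succ_zero (m : ℕ) : qSurj q (m + 1) 0 = 0 := by
  simp [qSurj, qnum_zero]

/- `q`-Pascal's rule makes the sum telescope. -/
lemma qSurj_zero_succ (hq0 : 0 < q) (hq1 : q ≠ 1) (t : ℕ) : qSurj q 0 (t + 1) = 0 := by
  set a : ℕ → ℝ := fun j => (-1) ^ j * q ^ (j + 1).choose 2 * qbinom q t j
  have hstep : ∀ i ∈ range t,
      (-1 : ℝ) ^ (i + 1) * q ^ (i + 1).choose 2 * qbinom q (t + 1) (i + 1) = a (i + 1) - a i := by
    intro i hi
    simp only [a, qbinom_succ_succ hq0 hq1 (mem_range.1 hi), Nat.succ_choose_two (i + 1), pow_add]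
    ring
  simp only [qSurj, pow_zero, mul_one]
  rw [sum_range_succ', sum_range_succ, sum_congr rfl hstep, sum_range_sub]
  simp [a, qbinom_self hq0 hq1, qbinom_zero_right hq0 hq1]
  ring

/- Split `[t+1]_q = [t+1-i]_q + q^(t+1-i) [i]_q` in each term; the second part reindexes via
`[i]_q binom(t+1,i)_q = [t+1]_q binom(t,i-1)_q`. -/
lemma qSurj_succ_succ (hq0 : 0 < q) (hq1 : q ≠ 1) (m t : ℕ) :
    qSurj q (m + 1) (t + 1) = qnum q (↑t + 1) * (qSurj q m (t + 1) + q ^ t * qSurj q m t) := by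
  have hshift : ∀ j ∈ range (t + 1),
      (-1 : ℝ) ^ (j + 1) * q ^ (j + 1).choose 2 * qbinom q (t + 1) (j + 1) *
        (q ^ (t + 1 - (j + 1)) * qnum q ↑(j + 1) * qnum q ↑(t + 1 - (j + 1)) ^ m) =
      -(q ^ t * qnum q (↑t + 1)) *
        ((-1) ^ j * q ^ j.choose 2 * qbinom q t j * qnum q ↑(t - j) ^ m) := by
    intro j hj
    have hq : q ^ (j + 1).choose 2 * q ^ (t - j) = q ^ j.choose 2 * q ^ t := by
      rw [← pow_add, ← pow_add, Nat.succ_choose_two]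
      congr 1
      have := mem_range.1 hj
      omega
    have hb := qnum_mul_qbinom_succ_succ hq0 hq1 j t
    push_cast at hb ⊢
    linear_combination ((-1 : ℝ) ^ (j + 1) * qnum q ↑(t - j) ^ m) *
      (q ^ (j + 1).choose 2 * q ^ (t - j) * hb + qnum q (↑t + 1) * qbinom q t j * hq)
  calc qSurj q (m + 1) (t + 1)
      = ∑ i ∈ range (t + 2), (-1 : ℝ) ^ i * q ^ i.choose 2 * qbinom q (t + 1) i *
          (qnum q (↑t + 1) * qnum q ↑(t + 1 - i) ^ m -
            q ^ (t + 1 - i) * qnum q i * qnum q ↑(t + 1 - i) ^ m) :=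
        sum_congr rfl fun i hi => by
          have := qnum_natCast_eq_sub_add (q := q) (Nat.lt_succ_iff.1 (mem_range.1 hi))
          push_cast at this
          rw [this]
          ring
    _ = qnum q (↑t + 1) * qSurj q m (t + 1) -
          ∑ i ∈ range (t + 2), (-1 : ℝ) ^ i * q ^ i.choose 2 * qbinom q (t + 1) i *
            (q ^ (t + 1 - i) * qnum q i * qnum q ↑(t + 1 - i) ^ m) := by
        simp only [qSurj, mul_sub, sum_sub_distrib, mul_sum]
        congr 1
        exact sum_congr rfl fun i _ => by ring
    _ = qnum q (↑t + 1) * (qSurj q m (t + 1) + q ^ t * qSurj q m t) := by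
        rw [sum_range_succ', sum_congr rfl hshift, ← mul_sum]
        simp only [qSurj, Nat.cast_zero, qnum_zero]
        ring

lemma qSurj_eq_zero_of_lt (hq0 : 0 < q) (hq1 : q ≠ 1) {m l : ℕ} (h : m < l) : qSurj q m l = 0 := by
  induction m generalizing l with
  | zero =>
    obtain ⟨t, rfl⟩ := Nat.exists_eq_succ_of_ne_zero h.ne'
    exact qSurj_zero_succ hq0 hq1 t
  | succ m ih =>
    obtain ⟨t, rfl⟩ := Nat.exists_eq_succ_of_ne_zero (Nat.ne_zero_of_lt h)
    rw [qSurj_succ_succ hq0 hq1, ih (by omega), ih (by omega)]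
    ring

end QSurj

section QStirlingExpansion

variable {q : ℝ}

lemma qbinomR_zero (x : ℝ) : qbinomR q x 0 = 1 := by
  simp [qbinomR, qfac_zero]

lemma qnum_mul_qbinomR (hq0 : 0 < q) (hq1 : q ≠ 1) (x : ℝ) (l : ℕ) :
    qnum q x * qbinomR q x l =
      qnum q l * qbinomR q x l + q ^ l * qnum q (↑l + 1) * qbinomR q x (l + 1) := by
  have hl := (qfac_pos hq0 hq1 l).ne'
  have hl' := (qnum_pos hq0 hq1 (by positivity : (0 : ℝ) < l + 1)).ne'
  have hx : qnum q x = qnum q l + q ^ l * qnum q (x - l) := by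
    rw [← Real.rpow_natCast, ← qnum_add hq0, add_sub_cancel]
  rw [hx, qbinomR, qbinomR, prod_range_succ, qfac_succ]
  field_simp

lemma qnum_pow_eq_sum_qbinomR_mul_qSurj (hq0 : 0 < q) (hq1 : q ≠ 1) (x : ℝ) (m : ℕ) :
    qnum q x ^ m = ∑ l ∈ range (m + 1), qbinomR q x l * qSurj q m l := by
  induction m with
  | zero => simp [qbinomR_zero, qSurj_zero_zero hq0 hq1]
  | succ m ih =>
    set f : ℕ → ℝ := fun l => qnum q l * qbinomR q x l * qSurj q m l
    set g : ℕ → ℝ := fun l => q ^ l * qnum q (↑l + 1) * qbinomR q x (l + 1) * qSurj q m l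
    have hf0 : f 0 = 0 := by simp [f, qnum_zero]
    have hftop : f (m + 1) = 0 := by simp [f, qSurj_eq_zero_of_lt hq0 hq1 (Nat.lt_succ_self m)]
    calc qnum q x ^ (m + 1)
        = ∑ l ∈ range (m + 1), (f l + g l) := by
          rw [pow_succ, ih, sum_mul]
          refine sum_congr rfl fun l _ => ?_
          simp only [f, g]
          linear_combination qSurj q m l * qnum_mul_qbinomR hq0 hq1 x l
      _ = ∑ l ∈ range (m + 1), f (l + 1) + ∑ l ∈ range (m + 1), g l := by
          rw [sum_add_distrib, ← add_zero (∑ l ∈ range (m + 1), f l), ← hftop, ← sum_range_succ,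
            sum_range_succ', hf0, add_zero]
      _ = ∑ l ∈ range (m + 2), qbinomR q x l * qSurj q (m + 1) l := by
          rw [sum_range_succ' _ (m + 1), qSurj_succ_zero, mul_zero, add_zero, ← sum_add_distrib]
          refine sum_congr rfl fun l _ => ?_
          simp only [f, g, qSurj_succ_succ hq0 hq1]
          push_cast
          ring

lemma qStirling_eq_qSurj (m l : ℕ) :
    qStirling q m l = (q ^ l.choose 2)⁻¹ / qfac q l * qSurj q m l :=
  rfl

lemma sum_pow_choose_two_mul_qbinomR_mul_qfac_mul_qStirling (hq0 : 0 < q) (hq1 : q ≠ 1)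
    (x : ℝ) (m : ℕ) :
    ∑ l ∈ Icc 0 m, q ^ l.choose 2 * (qbinomR q x l * qfac q l * qStirling q m l) =
      qnum q x ^ m := by
  rw [qnum_pow_eq_sum_qbinomR_mul_qSurj hq0 hq1, Nat.range_succ_eq_Icc_zero]
  refine sum_congr rfl fun l _ => ?_
  have hl := (qfac_pos hq0 hq1 l).ne'
  have hq := pow_ne_zero (l.choose 2) hq0.ne'
  rw [qStirling_eq_qSurj]
  field_simp

end QStirlingExpansion

theorem modified_qBernstein_degree_evaluation_eq_qStirling_expansion_general
    (q : ℝ) (hq0 : 0 < q) (hq1 : q < 1)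
    (w : ℕ) (m : ℕ) (n : Fin w → ℕ) (hn : ∀ i, m ≤ n i)
    (x : Fin w → ℝ) (hx : ∀ i, x i ∈ Set.Icc (0 : ℝ) 1) :
    (∏ i, (qnum q (1 - x i) + qnum q (x i)) ^ (-((n i : ℤ) - (m : ℤ)))) *
        ∑ k ∈ Finset.Icc (fun _ => m : Fin w → ℕ) n,
          ∏ i, (((k i).choose m : ℝ) / ((n i).choose m : ℝ)) *
            qBern q (k i) (n i) (x i) =
      ∑ l ∈ Finset.Icc (0 : Fin w → ℕ) (fun _ => m),
        q ^ (∑ i, (l i).choose 2) *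
          ∏ i, qbinomR q (x i) (l i) * qfac q (l i) * qStirling q m (l i) := by
  calc _ = ∏ i, ((qnum q (1 - x i) + qnum q (x i)) ^ (-((n i : ℤ) - m)) *
          ∑ k ∈ Icc m (n i), ((k.choose m : ℝ) / (n i).choose m) * qBern q k (n i) (x i)) := by
        rw [prod_mul_distrib, prod_univ_sum, Pi.Icc_eq]
    _ = ∏ i, qnum q (x i) ^ m :=
        prod_congr rfl fun i _ =>
          zpow_neg_mul_sum_choose_div_choose_mul_qBern hq0 hq1.ne (hx i) (hn i)
    _ = ∏ i, ∑ l ∈ Icc 0 m, q ^ l.choose 2 * (qbinomR q (x i) l * qfac q l * qStirling q m l) :=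
        prod_congr rfl fun i _ =>
          (sum_pow_choose_two_mul_qbinomR_mul_qfac_mul_qStirling hq0 hq1.ne (x i) m).symm
    _ = _ := by
        rw [Pi.Icc_eq, prod_univ_sum]
        refine sum_congr rfl fun l _ => ?_
        rw [← prod_pow_eq_pow_sum, ← prod_mul_distrib]

/-- The degree evaluation expression for the modified `q`-Bernstein polynomials
of several variables equals the `q`-Stirling expansion of `(∏ᵢ [xᵢ]_q)^m`. -/
theorem modified_qBernstein_degree_evaluation_eq_qStirling_expansion
    (q : ℝ) (hq0 : 0 < q) (hq1 : q < 1)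
    (w : ℕ) (hw : 1 ≤ w) (m : ℕ) (n : Fin w → ℕ) (hn : ∀ i, m ≤ n i)
    (x : Fin w → ℝ) (hx : ∀ i, x i ∈ Set.Icc (0 : ℝ) 1) :
    (∏ i, (qnum q (1 - x i) + qnum q (x i)) ^ (-((n i : ℤ) - (m : ℤ)))) *
        ∑ k ∈ Finset.Icc (fun _ => m : Fin w → ℕ) n,
          ∏ i, (((k i).choose m : ℝ) / ((n i).choose m : ℝ)) *
            qBern q (k i) (n i) (x i) =
      ∑ l ∈ Finset.Icc (0 : Fin w → ℕ) (fun _ => m),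
        q ^ (∑ i, (l i).choose 2) *
          ∏ i, qbinomR q (x i) (l i) * qfac q (l i) * qStirling q m (l i) :=
  modified_qBernstein_degree_evaluation_eq_qStirling_expansion_general q hq0 hq1 w m n hn x hx
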